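/- arXiv:1304.0228 — 2 statements merged into one kernel-verified Lean document; each statement's English description precedes it below -/
import Mathlib

section
/- Let l₁, l₂ : V → V be semilinear bijections (each over some automorphism of K) such that for every k-dimensional subspace S and every (n−k)-dimensional subspace U of V, S and U are complementary if and only if l₁(S) and l₂(U) are complementary. Then l₁(W) = l₂(W) for every subspace W of V. -/
open Module

variable (K V : Type*) [DivisionRing K] [AddCommGroup V] [Module K V]

/-- Two subspaces `P`, `T` are adjacent: `dim P = dim T = dim (P ⊓ T) + 1`. -/
def SubAdj (P T : Submodule K V) : Prop :=
  finrank K P = finrank K T ∧ finrank K P = finrank K ↥(P ⊓ T) + 1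

/-- Two subspaces are complementary. -/
def SubCompl (S U : Submodule K V) : Prop := S ⊓ U = ⊥ ∧ S ⊔ U = ⊤

/-- The set 𝒢 of pairs of complementary subspaces of dimensions `k` and `n - k`. -/
def GSet (n k : ℕ) : Set (Submodule K V × Submodule K V) :=
  {p | finrank K p.1 = k ∧ finrank K p.2 = n - k ∧ SubCompl K V p.1 p.2}

/-- Adjacency of pairs. -/
def PairAdj (p q : Submodule K V × Submodule K V) : Prop :=
  (p.1 = q.1 ∧ SubAdj K V p.2 q.2) ∨ (SubAdj K V p.1 q.1 ∧ p.2 = q.2)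

/-- Closeness of pairs. -/
def PairClose (p q : Submodule K V × Submodule K V) : Prop :=
  (p.1 = q.1 ∧ p.2 ≠ q.2) ∨ (p.1 ≠ q.1 ∧ p.2 = q.2)

/-!
A semilinear bijection induces a dimension-preserving automorphism of the lattice of subspaces,
so we get two such automorphisms `Φ₁`, `Φ₂`. For a `k`-dimensional `S`, the hypothesis says that
`Φ₁ S` and `Φ₂ S` have the same `(n - k)`-dimensional complements, and a subspace is determined by
its complements, since any vector outside a subspace lies in some complement of it. Hence `Φ₁` and
`Φ₂` agree on `k`-dimensional subspaces. As `1 ≤ k < n`, every line is the meet of the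
`k`-dimensional subspaces containing it and every subspace is the join of its lines, so `Φ₁ = Φ₂`.
-/

theorem subCompl_iff_isCompl {K V : Type*} [DivisionRing K] [AddCommGroup V] [Module K V]
    {S U : Submodule K V} : SubCompl K V S U ↔ IsCompl S U := by
  rw [SubCompl, isCompl_iff, disjoint_iff, codisjoint_iff]

namespace Submodule

variable {K V}

theorem finrank_map_of_injective_of_ringEquiv {K' V' : Type*} [DivisionRing K']
    [AddCommGroup V'] [Module K' V'] {σ : K ≃+* K'} (f : V →ₛₗ[(σ : K →+* K')] V')
    (hf : Function.Injective f) (W : Submodule K V) :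
    finrank K' (W.map f) = finrank K W := by
  have := RingHomInvPair.of_ringEquiv σ
  have := RingHomInvPair.of_ringEquiv_symm σ
  let e := equivMapOfInjective f hf W
  have h := congrArg Cardinal.toNat
    (lift_rank_eq_of_equiv_equiv σ e.toAddEquiv σ.bijective fun c x => map_smulₛₗ e c x)
  rw [Cardinal.toNat_lift, Cardinal.toNat_lift] at h
  exact h.symm

theorem le_of_forall_isCompl_imp {A B : Submodule K V}
    (h : ∀ U, IsCompl B U → IsCompl A U) : A ≤ B := by
  intro v hvA
  by_contra hvB
  obtain ⟨D, hvD, hBD⟩ := (disjoint_span_singleton_of_notMem hvB).symm.exists_isCompl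
  have hv0 : v = 0 := disjoint_def.mp (h D hBD.symm).disjoint v hvA
    (hvD (mem_span_singleton_self v))
  exact hvB (hv0 ▸ B.zero_mem)

variable [FiniteDimensional K V]

theorem eq_of_forall_isCompl_iff {k : ℕ} {A B : Submodule K V}
    (hA : finrank K A = k) (hB : finrank K B = k)
    (h : ∀ U : Submodule K V, finrank K U = finrank K V - k → (IsCompl A U ↔ IsCompl B U)) :
    A = B := by
  have finrank_compl {C U : Submodule K V} (hC : finrank K C = k) (hU : IsCompl C U) :
      finrank K U = finrank K V - k := by
    have := finrank_add_eq_of_isCompl hU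
    omega
  exact le_antisymm
    (le_of_forall_isCompl_imp fun U hU => (h U (finrank_compl hB hU)).2 hU)
    (le_of_forall_isCompl_imp fun U hU => (h U (finrank_compl hA hU)).1 hU)

theorem exists_le_le_finrank_eq {W D : Submodule K V} (hWD : W ≤ D) {k : ℕ}
    (hWk : finrank K W ≤ k) (hkD : k ≤ finrank K D) :
    ∃ S : Submodule K V, W ≤ S ∧ S ≤ D ∧ finrank K S = k := by
  induction k with
  | zero => exact ⟨W, le_rfl, hWD, Nat.le_zero.mp hWk⟩
  | succ k ih =>
    rcases hWk.eq_or_lt with hWk | hWk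
    · exact ⟨W, le_rfl, hWD, hWk⟩
    obtain ⟨S, hWS, hSD, hS⟩ := ih (Nat.lt_succ_iff.mp hWk) (by omega)
    have hSD' : S < D := lt_of_le_of_ne hSD fun h => by rw [h] at hS; omega
    obtain ⟨v, hvD, hvS⟩ := SetLike.exists_of_lt hSD'
    refine ⟨S ⊔ span K {v}, le_sup_of_le_left hWS, sup_le hSD ?_, ?_⟩
    · exact (span_singleton_le_iff_mem v D).mpr hvD
    · rw [finrank_sup_span_singleton hvS, hS]

theorem sInf_setOf_finrank_eq_of_finrank_le {W : Submodule K V} {k : ℕ}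
    (hWk : finrank K W ≤ k) (hk : k < finrank K V) :
    sInf {S : Submodule K V | finrank K S = k ∧ W ≤ S} = W := by
  refine le_antisymm (fun x hx => ?_) (le_sInf fun S hS => hS.2)
  by_contra hxW
  have hx0 : x ≠ 0 := fun h => hxW (h ▸ W.zero_mem)
  obtain ⟨D, hWD, hD⟩ := (disjoint_span_singleton_of_notMem hxW).exists_isCompl
  have hDx := finrank_add_eq_of_isCompl hD
  rw [finrank_span_singleton hx0] at hDx
  obtain ⟨S, hWS, hSD, hS⟩ := exists_le_le_finrank_eq hWD hWk (by omega)
  have hxS : x ∈ S := mem_sInf.mp hx S ⟨hS, hWS⟩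
  exact hx0 (disjoint_def.mp hD.disjoint x (hSD hxS) (mem_span_singleton_self x))

theorem orderIso_eq_of_forall_finrank_eq {α : Type*} [CompleteLattice α] {k : ℕ}
    (hk1 : 1 ≤ k) (hk : k < finrank K V) {Φ₁ Φ₂ : Submodule K V ≃o α}
    (h : ∀ S : Submodule K V, finrank K S = k → Φ₁ S = Φ₂ S) : Φ₁ = Φ₂ := by
  have line (x : V) : Φ₁ (K ∙ x) = Φ₂ (K ∙ x) := by
    have hx : finrank K (K ∙ x) ≤ k := (finrank_span_le_card {x}).trans (by simpa using hk1)
    rw [← sInf_setOf_finrank_eq_of_finrank_le hx hk, map_sInf, map_sInf,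
      Set.image_congr fun S hS => h S hS.1]
  refine OrderIso.ext (funext fun W => ?_)
  rw [← W.span_eq, span_eq_iSup_of_singleton_spans, OrderIso.map_iSup₂, OrderIso.map_iSup₂]
  simp only [line]

theorem orderIso_eq_of_isCompl_iff {k : ℕ} (hk1 : 1 ≤ k) (hk : k < finrank K V)
    {Φ₁ Φ₂ : Submodule K V ≃o Submodule K V}
    (hΦ₁ : ∀ W, finrank K (Φ₁ W) = finrank K W) (hΦ₂ : ∀ W, finrank K (Φ₂ W) = finrank K W)
    (h : ∀ S U : Submodule K V, finrank K S = k → finrank K U = finrank K V - k →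
      (IsCompl S U ↔ IsCompl (Φ₁ S) (Φ₂ U))) :
    Φ₁ = Φ₂ := by
  refine orderIso_eq_of_forall_finrank_eq hk1 hk fun S hS => ?_
  refine eq_of_forall_isCompl_iff ((hΦ₁ S).trans hS) ((hΦ₂ S).trans hS) fun U hU => ?_
  have hU' : finrank K (Φ₂.symm U) = finrank K V - k := by
    rw [← hΦ₂, Φ₂.apply_symm_apply, hU]
  rw [← Φ₂.apply_symm_apply U, ← h S _ hS hU', Φ₂.isCompl_iff]

end Submodule

theorem semilinear_pair_compatible_with_compl_agree_general
    {K V : Type*} [DivisionRing K] [AddCommGroup V] [Module K V]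
    [FiniteDimensional K V] {n k : ℕ} (hV : finrank K V = n)
    (hk1 : 1 ≤ k) (hk2 : k ≤ n - 1)
    (σ₁ σ₂ : K ≃+* K) (l₁ l₂ : V → V)
    (hb₁ : Function.Bijective l₁) (hb₂ : Function.Bijective l₂)
    (hadd₁ : ∀ x y : V, l₁ (x + y) = l₁ x + l₁ y)
    (hadd₂ : ∀ x y : V, l₂ (x + y) = l₂ x + l₂ y)
    (hsmul₁ : ∀ (c : K) (v : V), l₁ (c • v) = σ₁ c • l₁ v)
    (hsmul₂ : ∀ (c : K) (v : V), l₂ (c • v) = σ₂ c • l₂ v)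
    (hcompl : ∀ S U S' U' : Submodule K V,
      finrank K S = k → finrank K U = n - k →
      (S' : Set V) = l₁ '' (S : Set V) → (U' : Set V) = l₂ '' (U : Set V) →
      (SubCompl K V S U ↔ SubCompl K V S' U')) :
    ∀ W : Submodule K V, l₁ '' (W : Set V) = l₂ '' (W : Set V) := by
  let f₁ : V →ₛₗ[(σ₁ : K →+* K)] V := { toFun := l₁, map_add' := hadd₁, map_smul' := hsmul₁ }
  let f₂ : V →ₛₗ[(σ₂ : K →+* K)] V := { toFun := l₂, map_add' := hadd₂, map_smul' := hsmul₂ }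
  have hΦ := Submodule.orderIso_eq_of_isCompl_iff hk1 (by omega)
    (Φ₁ := Submodule.orderIsoMapComapOfBijective f₁ hb₁)
    (Φ₂ := Submodule.orderIsoMapComapOfBijective f₂ hb₂)
    (Submodule.finrank_map_of_injective_of_ringEquiv f₁ hb₁.injective)
    (Submodule.finrank_map_of_injective_of_ringEquiv f₂ hb₂.injective)
    fun S U hS hU => by
      simpa only [subCompl_iff_isCompl, Submodule.orderIsoMapComapOfBijective_apply] using
        hcompl S U _ _ hS (hV ▸ hU) (Submodule.map_coe f₁ S) (Submodule.map_coe f₂ U)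
  intro W
  exact congrArg (fun Φ => (Φ W : Set V)) hΦ

/-- If semilinear bijections `l₁, l₂ : V → V` are such that `S` and `U` are
complementary iff `l₁(S)` and `l₂(U)` are complementary (for `dim S = k`,
`dim U = n - k`), then `l₁` and `l₂` agree on all subspaces. -/
theorem semilinear_pair_compatible_with_compl_agree
    {K V : Type*} [DivisionRing K] [AddCommGroup V] [Module K V]
    [FiniteDimensional K V] {n k : ℕ} (hn : 2 ≤ n) (hV : finrank K V = n)
    (hk1 : 1 ≤ k) (hk2 : k ≤ n - 1)
    (σ₁ σ₂ : K ≃+* K) (l₁ l₂ : V → V)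
    (hb₁ : Function.Bijective l₁) (hb₂ : Function.Bijective l₂)
    (hadd₁ : ∀ x y : V, l₁ (x + y) = l₁ x + l₁ y)
    (hadd₂ : ∀ x y : V, l₂ (x + y) = l₂ x + l₂ y)
    (hsmul₁ : ∀ (c : K) (v : V), l₁ (c • v) = σ₁ c • l₁ v)
    (hsmul₂ : ∀ (c : K) (v : V), l₂ (c • v) = σ₂ c • l₂ v)
    (hcompl : ∀ S U S' U' : Submodule K V,
      finrank K S = k → finrank K U = n - k →
      (S' : Set V) = l₁ '' (S : Set V) → (U' : Set V) = l₂ '' (U : Set V) →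
      (SubCompl K V S U ↔ SubCompl K V S' U')) :
    ∀ W : Submodule K V, l₁ '' (W : Set V) = l₂ '' (W : Set V) :=
  semilinear_pair_compatible_with_compl_agree_general hV hk1 hk2 σ₁ σ₂ l₁ l₂ hb₁ hb₂ hadd₁ hadd₂
    hsmul₁ hsmul₂ hcompl
end

section
/- Let f be a bijection of G_k × G_{n−k} such that both f and f⁻¹ map close pairs to close pairs. Then either there exist bijections f' : G_k → G_k and f'' : G_{n−k} → G_{n−k} with f(S,U) = (f'(S), f''(U)) for all (S,U), or there exist bijections g' : G_k → G_{n−k} and g'' : G_{n−k} → G_k with f(S,U) = (g''(U), g'(S)) for all (S,U). -/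
/-!
Closeness on `A × B` is adjacency in the rook's graph: distinct points are close when they share
a row or a column. Pairwise close points lie on one line, so `f` sends every row and every column
into a line. A row `a` and a column `b` cannot both go to lines on which the same coordinate is
constant: for `a' ≠ a`, `b' ≠ b` the images of `(a', b)` and `(a, b')` would then agree in that
coordinate and so, being distinct, be close, whereas `(a', b)` and `(a, b')` are not. Hence either
all rows keep the first coordinate and all columns the second, or the other way round, which is
exactly the splitting of `f` as `f' × f''` or `g' ⋈ g''`.
-/

open Module

variable (K V : Type*) [DivisionRing K] [AddCommGroup V] [Module K V]

/-- The Grassmannian of `i`-dimensional subspaces of `V`. -/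
abbrev Grass (i : ℕ) := {S : Submodule K V // finrank K S = i}

open Function

section ProdClose

variable {α β γ δ : Type*}

def ProdClose (p q : α × β) : Prop :=
  (p.1 = q.1 ∧ p.2 ≠ q.2) ∨ (p.1 ≠ q.1 ∧ p.2 = q.2)

theorem prodClose_iff {p q : α × β} :
    ProdClose p q ↔ p ≠ q ∧ (p.1 = q.1 ∨ p.2 = q.2) := by
  simp only [ProdClose, ne_eq, Prod.ext_iff]
  tauto

theorem ProdClose.fst_eq_of_snd_ne {p q : α × β} (h : ProdClose p q) (h2 : p.2 ≠ q.2) :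
    p.1 = q.1 := by
  rcases h with ⟨h1, -⟩ | ⟨-, h2'⟩
  exacts [h1, absurd h2' h2]

theorem ProdClose.snd_eq_of_fst_ne {p q : α × β} (h : ProdClose p q) (h1 : p.1 ≠ q.1) :
    p.2 = q.2 := by
  rcases h with ⟨h1', -⟩ | ⟨-, h2⟩
  exacts [absurd h1' h1, h2]

theorem forall_fst_eq_or_forall_snd_eq_of_pairwise_prodClose {ι : Type*} {v : ι → α × β}
    (hv : Pairwise fun i j => ProdClose (v i) (v j)) :
    (∀ i j, (v i).1 = (v j).1) ∨ (∀ i j, (v i).2 = (v j).2) := by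
  by_cases hfst : ∀ i j, (v i).1 = (v j).1
  · exact .inl hfst
  push Not at hfst
  obtain ⟨i, j, hij⟩ := hfst
  have hsnd : (v i).2 = (v j).2 :=
    (hv (ne_of_apply_ne (fun l => (v l).1) hij)).snd_eq_of_fst_ne hij
  suffices h : ∀ l, (v l).2 = (v i).2 from .inr fun l m => (h l).trans (h m).symm
  intro l
  by_contra hl
  have hli : l ≠ i := by rintro rfl; exact hl rfl
  have hlj : l ≠ j := by rintro rfl; exact hl hsnd.symm
  exact hij (((hv hli).fst_eq_of_snd_ne hl).symm.trans
    ((hv hlj).fst_eq_of_snd_ne (hsnd ▸ hl)))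

theorem fst_ne_and_snd_ne_apply_of_reflect_prodClose {g : α × β → γ × δ}
    (hinj : Injective g) (hg : ∀ p q, ProdClose (g p) (g q) → ProdClose p q) {p q : α × β}
    (h1 : p.1 ≠ q.1) (h2 : p.2 ≠ q.2) : (g p).1 ≠ (g q).1 ∧ (g p).2 ≠ (g q).2 := by
  have hpq : ¬ProdClose p q := fun h => by
    rcases (prodClose_iff.1 h).2 with h | h <;> contradiction
  have hgpq := mt (hg p q) hpq
  rw [prodClose_iff, not_and, not_or] at hgpq
  exact hgpq (hinj.ne fun h => h1 (congrArg Prod.fst h))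

theorem exists_eq_prodMap [Nonempty α] [Nonempty β] {g : α × β → γ × δ}
    (h1 : ∀ a b b', (g (a, b)).1 = (g (a, b')).1)
    (h2 : ∀ a a' b, (g (a, b)).2 = (g (a', b)).2) :
    ∃ (f' : α → γ) (f'' : β → δ), g = Prod.map f' f'' := by
  inhabit α
  inhabit β
  exact ⟨fun a => (g (a, default)).1, fun b => (g (default, b)).2,
    funext fun p => Prod.ext (h1 p.1 p.2 default) (h2 p.1 default p.2)⟩

theorem exists_eq_prodMap_or_exists_swap_comp_eq_prodMap [Nontrivial α] [Nontrivial β]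
    {g : α × β → γ × δ} (hinj : Injective g)
    (hg : ∀ p q, ProdClose p q ↔ ProdClose (g p) (g q)) :
    (∃ (f' : α → γ) (f'' : β → δ), g = Prod.map f' f'') ∨
      (∃ (g' : α → δ) (g'' : β → γ), Prod.swap ∘ g = Prod.map g' g'') := by
  have hrow : ∀ a, (∀ b b', (g (a, b)).1 = (g (a, b')).1) ∨
      (∀ b b', (g (a, b)).2 = (g (a, b')).2) := fun a =>
    forall_fst_eq_or_forall_snd_eq_of_pairwise_prodClose fun b b' hb =>
      (hg _ _).1 (.inl ⟨rfl, hb⟩)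
  have hcol : ∀ b, (∀ a a', (g (a, b)).1 = (g (a', b)).1) ∨
      (∀ a a', (g (a, b)).2 = (g (a', b)).2) := fun b =>
    forall_fst_eq_or_forall_snd_eq_of_pairwise_prodClose fun a a' ha =>
      (hg _ _).1 (.inr ⟨ha, rfl⟩)
  have hoff : ∀ a b, ∃ a' b',
      (g (a', b)).1 ≠ (g (a, b')).1 ∧ (g (a', b)).2 ≠ (g (a, b')).2 := fun a b =>
    have ⟨a', ha'⟩ := exists_ne a
    have ⟨b', hb'⟩ := exists_ne b
    ⟨a', b', fst_ne_and_snd_ne_apply_of_reflect_prodClose hinj (fun p q => (hg p q).2)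
      ha' hb'.symm⟩
  have hfst : ∀ a b, (∀ b b', (g (a, b)).1 = (g (a, b')).1) →
      ¬∀ a a', (g (a, b)).1 = (g (a', b)).1 := fun a b hr hc =>
    have ⟨a', b', hne, _⟩ := hoff a b
    hne ((hc a' a).trans (hr b b'))
  have hsnd : ∀ a b, (∀ b b', (g (a, b)).2 = (g (a, b')).2) →
      ¬∀ a a', (g (a, b)).2 = (g (a', b)).2 := fun a b hr hc =>
    have ⟨a', b', _, hne⟩ := hoff a b
    hne ((hc a' a).trans (hr b b'))
  obtain ⟨a₀⟩ := ‹Nontrivial α›.to_nonempty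
  obtain ⟨b₀⟩ := ‹Nontrivial β›.to_nonempty
  rcases hrow a₀ with hr₀ | hr₀
  · have hc : ∀ b a a', (g (a, b)).2 = (g (a', b)).2 :=
      fun b => (hcol b).resolve_left (hfst a₀ b hr₀)
    have hr : ∀ a b b', (g (a, b)).1 = (g (a, b')).1 :=
      fun a => (hrow a).resolve_right fun h => hsnd a b₀ h (hc b₀)
    exact .inl (exists_eq_prodMap hr fun a a' b => hc b a a')
  · have hc : ∀ b a a', (g (a, b)).1 = (g (a', b)).1 :=
      fun b => (hcol b).resolve_right (hsnd a₀ b hr₀)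
    have hr : ∀ a b b', (g (a, b)).2 = (g (a, b')).2 :=
      fun a => (hrow a).resolve_left fun h => hfst a b₀ h (hc b₀)
    exact .inr (exists_eq_prodMap (g := Prod.swap ∘ g) hr fun a a' b => hc b a a')

end ProdClose

section Grass

variable {K V}

theorem nontrivial_grass {i : ℕ} (hi : 0 < i) (hin : i < finrank K V) :
    Nontrivial (Grass K V i) := by
  obtain ⟨m, rfl⟩ : ∃ m, i = m + 1 := Nat.exists_eq_add_one.2 hi
  obtain ⟨v, hv⟩ := exists_linearIndependent_of_le_finrank (R := K) (M := V) hin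
  have hS : finrank K (Submodule.span K (Set.range (v ∘ Fin.castSucc))) = m + 1 := by
    rw [finrank_span_eq_card (hv.comp _ (Fin.castSucc_injective _)), Fintype.card_fin]
  have hT : finrank K (Submodule.span K (Set.range (v ∘ Fin.succ))) = m + 1 := by
    rw [finrank_span_eq_card (hv.comp _ (Fin.succ_injective _)), Fintype.card_fin]
  refine ⟨⟨⟨_, hS⟩, ⟨_, hT⟩, fun h => ?_⟩⟩
  have hmem : v 0 ∈ Submodule.span K (Set.range (v ∘ Fin.castSucc)) :=
    Submodule.subset_span ⟨0, rfl⟩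
  rw [Subtype.mk.injEq] at h
  rw [h, Set.range_comp] at hmem
  exact hv.notMem_span_image (by simp) hmem

end Grass

theorem closeness_preserving_on_product_general
    {K V : Type*} [DivisionRing K] [AddCommGroup V] [Module K V]
    {n k : ℕ} (hV : finrank K V = n)
    (hk1 : 1 ≤ k) (hk2 : k ≤ n - 1)
    (f : Grass K V k × Grass K V (n - k) → Grass K V k × Grass K V (n - k))
    (hf : Function.Bijective f)
    (hclose : ∀ p q : Grass K V k × Grass K V (n - k),
      ((p.1 = q.1 ∧ p.2 ≠ q.2) ∨ (p.1 ≠ q.1 ∧ p.2 = q.2)) ↔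
      (((f p).1 = (f q).1 ∧ (f p).2 ≠ (f q).2) ∨
       ((f p).1 ≠ (f q).1 ∧ (f p).2 = (f q).2))) :
    (∃ (f' : Grass K V k → Grass K V k)
       (f'' : Grass K V (n - k) → Grass K V (n - k)),
        Function.Bijective f' ∧ Function.Bijective f'' ∧
        ∀ p, f p = (f' p.1, f'' p.2)) ∨
    (∃ (g' : Grass K V k → Grass K V (n - k))
       (g'' : Grass K V (n - k) → Grass K V k),
        Function.Bijective g' ∧ Function.Bijective g'' ∧
        ∀ p, f p = (g'' p.2, g' p.1)) := by
  have : Nontrivial (Grass K V k) := nontrivial_grass (by omega) (by omega)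
  have : Nontrivial (Grass K V (n - k)) := nontrivial_grass (by omega) (by omega)
  rcases exists_eq_prodMap_or_exists_swap_comp_eq_prodMap hf.1 hclose with
    ⟨f', f'', hsplit⟩ | ⟨g', g'', hsplit⟩
  · obtain ⟨hf', hf''⟩ := Prod.map_bijective.1 (hsplit ▸ hf)
    exact .inl ⟨f', f'', hf', hf'', fun p => congrFun hsplit p⟩
  · obtain ⟨hg', hg''⟩ := Prod.map_bijective.1 (hsplit ▸ Prod.swap_bijective.comp hf)
    exact .inr ⟨g', g'', hg', hg'', fun p => congrArg Prod.swap (congrFun hsplit p)⟩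

/-- Every closeness preserving transformation of the full product 𝒢_k × 𝒢_{n-k}
is of the form `f' × f''` or `g' ⋈ g''` for bijections. -/
theorem closeness_preserving_on_product
    {K V : Type*} [DivisionRing K] [AddCommGroup V] [Module K V]
    [FiniteDimensional K V] {n k : ℕ} (hn : 2 ≤ n) (hV : finrank K V = n)
    (hk1 : 1 ≤ k) (hk2 : k ≤ n - 1)
    (f : Grass K V k × Grass K V (n - k) → Grass K V k × Grass K V (n - k))
    (hf : Function.Bijective f)
    (hclose : ∀ p q : Grass K V k × Grass K V (n - k),
      ((p.1 = q.1 ∧ p.2 ≠ q.2) ∨ (p.1 ≠ q.1 ∧ p.2 = q.2)) ↔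
      (((f p).1 = (f q).1 ∧ (f p).2 ≠ (f q).2) ∨
       ((f p).1 ≠ (f q).1 ∧ (f p).2 = (f q).2))) :
    (∃ (f' : Grass K V k → Grass K V k)
       (f'' : Grass K V (n - k) → Grass K V (n - k)),
        Function.Bijective f' ∧ Function.Bijective f'' ∧
        ∀ p, f p = (f' p.1, f'' p.2)) ∨
    (∃ (g' : Grass K V k → Grass K V (n - k))
       (g'' : Grass K V (n - k) → Grass K V k),
        Function.Bijective g' ∧ Function.Bijective g'' ∧
        ∀ p, f p = (g'' p.2, g' p.1)) :=
  closeness_preserving_on_product_general hV hk1 hk2 f hf hclose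
end
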